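/- Let (h,u) be a C² smooth solution of the radially symmetric isentropic Euler equations in sound-speed form on an open set contained in {r > 0}, with h > 0 and c₁ c₂ ≠ 0 everywhere on that set. Then β satisfies the simplified Riccati equation ∂₁ β = −((γ+1)/4) β² + ((γ−3)/4) α β + A₁ (α − β) + ((γ−3) m / r) (u² h² / (c₁² c₂)) β, where A₁ = (m c₂/(2 r c₁²)) ((γ−1)/2 · u² − h²). -/

import Mathlib

open Real Set Filter Topology

/-- Partial derivative with respect to the spatial variable `r` (first coordinate). -/
noncomputable def pdr (f : ℝ × ℝ → ℝ) (p : ℝ × ℝ) : ℝ := fderiv ℝ f p (1, 0)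

/-- Partial derivative with respect to the time variable `t` (second coordinate). -/
noncomputable def pdt (f : ℝ × ℝ → ℝ) (p : ℝ × ℝ) : ℝ := fderiv ℝ f p (0, 1)

/-- Directional derivative `∂_t + c ∂_r` along a characteristic with speed `c`. -/
noncomputable def Dc (c f : ℝ × ℝ → ℝ) (p : ℝ × ℝ) : ℝ := pdt f p + c p * pdr f p

/-- `(h,u)` solves the radially symmetric isentropic Euler equations in
sound-speed form on the set `U`. -/
def IsEulerSound (γ : ℝ) (m : ℕ) (U : Set (ℝ × ℝ)) (h u : ℝ × ℝ → ℝ) : Prop :=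
  ∀ p ∈ U,
    pdt h p + u p * pdr h p + (γ - 1) / 2 * h p * pdr u p
      = -((γ - 1) / 2) * ((m : ℝ) * u p * h p / p.1) ∧
    pdt u p + u p * pdr u p + 2 / (γ - 1) * h p * pdr h p = 0

/-- The gradient variable `α = u_r + (2/(γ-1)) h_r + m h u / (r c₂)`. -/
noncomputable def alp (γ : ℝ) (m : ℕ) (h u : ℝ × ℝ → ℝ) (p : ℝ × ℝ) : ℝ :=
  pdr u p + 2 / (γ - 1) * pdr h p + (m : ℝ) * h p * u p / (p.1 * (u p + h p))

/-- The gradient variable `β = u_r - (2/(γ-1)) h_r - m h u / (r c₁)`. -/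
noncomputable def bet (γ : ℝ) (m : ℕ) (h u : ℝ × ℝ → ℝ) (p : ℝ × ℝ) : ℝ :=
  pdr u p - 2 / (γ - 1) * pdr h p - (m : ℝ) * h p * u p / (p.1 * (u p - h p))

/-- The weighted gradient variable `α̃ = h^{(γ-3)/(2(γ-1))} α`. -/
noncomputable def alpT (γ : ℝ) (m : ℕ) (h u : ℝ × ℝ → ℝ) (p : ℝ × ℝ) : ℝ :=
  h p ^ ((γ - 3) / (2 * (γ - 1))) * alp γ m h u p

/-- The weighted gradient variable `β̃ = h^{(γ-3)/(2(γ-1))} β`. -/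
noncomputable def betT (γ : ℝ) (m : ℕ) (h u : ℝ × ℝ → ℝ) (p : ℝ × ℝ) : ℝ :=
  h p ^ ((γ - 3) / (2 * (γ - 1))) * bet γ m h u p

section RiccatiHelpers

variable {A B : ℝ × ℝ → ℝ} {p v : ℝ × ℝ}

private lemma pd_add (hA : DifferentiableAt ℝ A p) (hB : DifferentiableAt ℝ B p) :
    fderiv ℝ (fun q => A q + B q) p v = fderiv ℝ A p v + fderiv ℝ B p v := by
  rw [fderiv_fun_add hA hB]; simp

private lemma pd_sub (hA : DifferentiableAt ℝ A p) (hB : DifferentiableAt ℝ B p) :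
    fderiv ℝ (fun q => A q - B q) p v = fderiv ℝ A p v - fderiv ℝ B p v := by
  rw [fderiv_fun_sub hA hB]; simp

private lemma pd_mul (hA : DifferentiableAt ℝ A p) (hB : DifferentiableAt ℝ B p) :
    fderiv ℝ (fun q => A q * B q) p v
      = fderiv ℝ A p v * B p + A p * fderiv ℝ B p v := by
  rw [fderiv_fun_mul hA hB]; simp; ring

private lemma pd_const_mul (c : ℝ) (hB : DifferentiableAt ℝ B p) :
    fderiv ℝ (fun q => c * B q) p v = c * fderiv ℝ B p v := by
  rw [fderiv_const_mul hB c]; simp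

private lemma pd_fst : fderiv ℝ (fun q : ℝ × ℝ => q.1) p v = v.1 := by
  have h1 : fderiv ℝ (fun q : ℝ × ℝ => q.1) p = ContinuousLinearMap.fst ℝ ℝ ℝ := fderiv_fst
  rw [h1]; rfl

private lemma pd_inv (hB : DifferentiableAt ℝ B p) (h0 : B p ≠ 0) :
    fderiv ℝ (fun q => (B q)⁻¹) p v = -fderiv ℝ B p v / B p ^ 2 := by
  have h1 : fderiv ℝ (fun q => (B q)⁻¹) p
      = (fderiv ℝ (fun x : ℝ => x⁻¹) (B p)).comp (fderiv ℝ B p) :=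
    fderiv_comp p (differentiableAt_inv h0) hB
  rw [h1, fderiv_inv]
  simp [ContinuousLinearMap.comp_apply]
  ring

private lemma diff_div (hA : DifferentiableAt ℝ A p) (hB : DifferentiableAt ℝ B p)
    (h0 : B p ≠ 0) : DifferentiableAt ℝ (fun q => A q / B q) p := by
  simp only [div_eq_mul_inv]; exact hA.mul (hB.inv h0)

private lemma pd_div (hA : DifferentiableAt ℝ A p) (hB : DifferentiableAt ℝ B p)
    (h0 : B p ≠ 0) :
    fderiv ℝ (fun q => A q / B q) p v
      = (fderiv ℝ A p v * B p - A p * fderiv ℝ B p v) / B p ^ 2 := by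
  have h2 : DifferentiableAt ℝ (fun q => (B q)⁻¹) p := hB.inv h0
  have h3 := pd_mul (v := v) hA h2
  have h4 := pd_inv (v := v) hB h0
  simp only [div_eq_mul_inv]
  rw [h3, h4]
  field_simp
  ring

private lemma pd_clm {f : ℝ × ℝ → ℝ} (hf : DifferentiableAt ℝ (fderiv ℝ f) p) (w : ℝ × ℝ) :
    fderiv ℝ (fun q => fderiv ℝ f q w) p v = fderiv ℝ (fderiv ℝ f) p v w := by
  have h1 : fderiv ℝ (fun q => fderiv ℝ f q w) p
      = (fderiv ℝ f p).comp (fderiv ℝ (fun _ : ℝ × ℝ => w) p)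
        + (fderiv ℝ (fderiv ℝ f) p).flip w :=
    fderiv_clm_apply hf (differentiableAt_const w)
  rw [h1]
  simp

end RiccatiHelpers

set_option maxHeartbeats 4000000 in
private theorem riccati_algebra (g M r h0 u0 hr ur Urr Hrr : ℝ)
    (hr0 : r ≠ 0) (hc1 : u0 - h0 ≠ 0) (hc2 : u0 + h0 ≠ 0) (hg1 : g - 1 ≠ 0) :
    ((-(ur * ur + u0 * Urr) - 2 / (g - 1) * (hr * hr + h0 * Hrr)) - 2 / (g - 1) * (-(ur * hr + u0 * Hrr) - (g - 1) / 2 * (hr * ur + h0 * Urr) - (g - 1) / 2 * (((M * ur * h0 + M * u0 * hr) * r - M * u0 * h0 * 1) / r ^ 2)) - ((M * (-(u0 * hr + (g - 1) / 2 * h0 * ur) - (g - 1) / 2 * (M * u0 * h0 / r)) * u0 + M * h0 * (-(u0 * ur + 2 / (g - 1) * h0 * hr))) * (r * (u0 - h0)) - M * h0 * u0 * (0 * (u0 - h0) + r * ((-(u0 * ur + 2 / (g - 1) * h0 * hr)) - (-(u0 * hr + (g - 1) / 2 * h0 * ur) - (g - 1) / 2 * (M * u0 * h0 / r))))) / (r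 * (u0 - h0)) ^ 2)
      + (u0 - h0) * (Urr - 2 / (g - 1) * Hrr - ((M * hr * u0 + M * h0 * ur) * (r * (u0 - h0)) - M * h0 * u0 * (1 * (u0 - h0) + r * (ur - hr))) / (r * (u0 - h0)) ^ 2)
    = -((g + 1) / 4) * (ur - 2 / (g - 1) * hr - M * h0 * u0 / (r * (u0 - h0))) ^ 2 + (g - 3) / 4 * ((ur + 2 / (g - 1) * hr + M * h0 * u0 / (r * (u0 + h0))) * (ur - 2 / (g - 1) * hr - M * h0 * u0 / (r * (u0 - h0))))
      + (M * (u0 + h0) / (2 * r * (u0 - h0) ^ 2) * ((g - 1) / 2 * u0 ^ 2 - h0 ^ 2)) * ((ur + 2 / (g - 1) * hr + M * h0 * u0 / (r * (u0 + h0))) - (ur - 2 / (g - 1) * hr - M * h0 * u0 / (r * (u0 - h0))))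
      + (g - 3) * M / r * (u0 ^ 2 * h0 ^ 2 / ((u0 - h0) ^ 2 * (u0 + h0))) * (ur - 2 / (g - 1) * hr - M * h0 * u0 / (r * (u0 - h0))) := by
  field_simp
  ring


set_option maxHeartbeats 2000000 in
/-- simplified Riccati equation
`∂₁β = -((γ+1)/4)β² + ((γ-3)/4)αβ + A₁(α-β) + ((γ-3)m/r)(u²h²/(c₁²c₂))β`
for a `C²` smooth solution of the sound-speed Euler system. -/
theorem simplified_riccati_beta
    (γ : ℝ) (hγ : 1 < γ) (m : ℕ) (hm : 1 ≤ m)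
    (U : Set (ℝ × ℝ)) (hU : IsOpen U) (hUr : ∀ p ∈ U, 0 < p.1)
    (h u : ℝ × ℝ → ℝ) (hhpos : ∀ p ∈ U, 0 < h p)
    (hc : ∀ p ∈ U, (u p - h p) * (u p + h p) ≠ 0)
    (hhC : ContDiffOn ℝ 2 h U) (huC : ContDiffOn ℝ 2 u U)
    (heuler : IsEulerSound γ m U h u) :
    ∀ p ∈ U,
      Dc (fun q => u q - h q) (bet γ m h u) p
        = -((γ + 1) / 4) * bet γ m h u p ^ 2
          + (γ - 3) / 4 * (alp γ m h u p * bet γ m h u p)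
          + ((m : ℝ) * (u p + h p) / (2 * p.1 * (u p - h p) ^ 2)
              * ((γ - 1) / 2 * u p ^ 2 - h p ^ 2))
            * (alp γ m h u p - bet γ m h u p)
          + (γ - 3) * (m : ℝ) / p.1
              * (u p ^ 2 * h p ^ 2 / ((u p - h p) ^ 2 * (u p + h p)))
            * bet γ m h u p := by
  intro p hp
  have hmem : U ∈ 𝓝 p := hU.mem_nhds hp
  have hγ1 : γ - 1 ≠ 0 := sub_ne_zero.mpr (ne_of_gt hγ)
  have hr0 : p.1 ≠ 0 := ne_of_gt (hUr p hp)
  have hcc := hc p hp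
  have hc1 : u p - h p ≠ 0 := fun hh => hcc (by rw [hh, zero_mul])
  have hc2 : u p + h p ≠ 0 := fun hh => hcc (by rw [hh, mul_zero])
  -- smoothness
  have hu2 : ContDiffAt ℝ 2 u p := huC.contDiffAt hmem
  have hh2 : ContDiffAt ℝ 2 h p := hhC.contDiffAt hmem
  have hdu : DifferentiableAt ℝ u p := hu2.differentiableAt (by norm_num)
  have hdh : DifferentiableAt ℝ h p := hh2.differentiableAt (by norm_num)
  have hdu' : DifferentiableAt ℝ (fderiv ℝ u) p :=
    (hu2.fderiv_right (m := 1) (by norm_num)).differentiableAt one_ne_zero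
  have hdh' : DifferentiableAt ℝ (fderiv ℝ h) p :=
    (hh2.fderiv_right (m := 1) (by norm_num)).differentiableAt one_ne_zero
  have hdU1 : DifferentiableAt ℝ (fun q => fderiv ℝ u q (1, 0)) p :=
    hdu'.clm_apply (differentiableAt_const _)
  have hdU2 : DifferentiableAt ℝ (fun q => fderiv ℝ u q (0, 1)) p :=
    hdu'.clm_apply (differentiableAt_const _)
  have hdH1 : DifferentiableAt ℝ (fun q => fderiv ℝ h q (1, 0)) p :=
    hdh'.clm_apply (differentiableAt_const _)
  have hdH2 : DifferentiableAt ℝ (fun q => fderiv ℝ h q (0, 1)) p :=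
    hdh'.clm_apply (differentiableAt_const _)
  have hfst : DifferentiableAt ℝ (fun q : ℝ × ℝ => q.1) p := differentiableAt_fst
  -- Euler at p
  obtain ⟨E1, E2⟩ := heuler p hp
  simp only [pdt, pdr] at E1 E2
  have hut : fderiv ℝ u p (0, 1)
      = -(u p * fderiv ℝ u p (1, 0) + 2 / (γ - 1) * h p * fderiv ℝ h p (1, 0)) := by
    linarith
  have hht : fderiv ℝ h p (0, 1)
      = -(u p * fderiv ℝ h p (1, 0) + (γ - 1) / 2 * h p * fderiv ℝ u p (1, 0))
        - (γ - 1) / 2 * ((m : ℝ) * u p * h p / p.1) := by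
    linarith
  -- differentiated Euler equation 2 (direction (1,0))
  have hdB2 : DifferentiableAt ℝ
      (fun q => u q * fderiv ℝ u q (1, 0) + 2 / (γ - 1) * (h q * fderiv ℝ h q (1, 0))) p :=
    (hdu.mul hdU1).add ((hdh.mul hdH1).const_mul _)
  have hG2 : (fun q => fderiv ℝ u q (0, 1)
        + (u q * fderiv ℝ u q (1, 0) + 2 / (γ - 1) * (h q * fderiv ℝ h q (1, 0))))
      =ᶠ[nhds p] (fun _ => (0 : ℝ)) := by
    filter_upwards [hmem] with q hq
    have hq2 := (heuler q hq).2
    simp only [pdt, pdr] at hq2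
    linear_combination hq2
  have e2r : fderiv ℝ (fun q => fderiv ℝ u q (0, 1)) p (1, 0)
      + (fderiv ℝ u p (1, 0) * fderiv ℝ u p (1, 0)
          + u p * fderiv ℝ (fun q => fderiv ℝ u q (1, 0)) p (1, 0))
      + 2 / (γ - 1) * (fderiv ℝ h p (1, 0) * fderiv ℝ h p (1, 0)
          + h p * fderiv ℝ (fun q => fderiv ℝ h q (1, 0)) p (1, 0)) = 0 := by
    have h0 : fderiv ℝ (fun q => fderiv ℝ u q (0, 1)
        + (u q * fderiv ℝ u q (1, 0) + 2 / (γ - 1) * (h q * fderiv ℝ h q (1, 0)))) p (1, 0)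
        = 0 := by
      rw [hG2.fderiv_eq]; simp
    rw [pd_add hdU2 hdB2, pd_add (hdu.fun_mul hdU1) ((hdh.fun_mul hdH1).const_mul _),
      pd_mul hdu hdU1, pd_const_mul _ (hdh.fun_mul hdH1), pd_mul hdh hdH1] at h0
    linarith
  -- differentiated Euler equation 1 (direction (1,0))
  have hdQ : DifferentiableAt ℝ (fun q => (m : ℝ) * u q * h q / q.1) p :=
    diff_div ((hdu.const_mul _).mul hdh) hfst hr0
  have hdB1 : DifferentiableAt ℝ
      (fun q => u q * fderiv ℝ h q (1, 0) + (γ - 1) / 2 * (h q * fderiv ℝ u q (1, 0))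
        + (γ - 1) / 2 * ((m : ℝ) * u q * h q / q.1)) p :=
    ((hdu.mul hdH1).add ((hdh.mul hdU1).const_mul _)).add (hdQ.const_mul _)
  have hG1 : (fun q => fderiv ℝ h q (0, 1)
        + (u q * fderiv ℝ h q (1, 0) + (γ - 1) / 2 * (h q * fderiv ℝ u q (1, 0))
          + (γ - 1) / 2 * ((m : ℝ) * u q * h q / q.1)))
      =ᶠ[nhds p] (fun _ => (0 : ℝ)) := by
    filter_upwards [hmem] with q hq
    have hq1 := (heuler q hq).1
    simp only [pdt, pdr] at hq1
    linear_combination hq1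
  have dQ : fderiv ℝ (fun q => (m : ℝ) * u q * h q / q.1) p (1, 0)
      = (((m : ℝ) * fderiv ℝ u p (1, 0) * h p + (m : ℝ) * u p * fderiv ℝ h p (1, 0)) * p.1
          - (m : ℝ) * u p * h p * 1) / p.1 ^ 2 := by
    rw [pd_div ((hdu.const_mul _).fun_mul hdh) hfst hr0,
      pd_mul (hdu.const_mul (m : ℝ)) hdh, pd_const_mul _ hdu, pd_fst]
  have e1r : fderiv ℝ (fun q => fderiv ℝ h q (0, 1)) p (1, 0)
      + (fderiv ℝ u p (1, 0) * fderiv ℝ h p (1, 0)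
          + u p * fderiv ℝ (fun q => fderiv ℝ h q (1, 0)) p (1, 0))
      + (γ - 1) / 2 * (fderiv ℝ h p (1, 0) * fderiv ℝ u p (1, 0)
          + h p * fderiv ℝ (fun q => fderiv ℝ u q (1, 0)) p (1, 0))
      + (γ - 1) / 2 * ((((m : ℝ) * fderiv ℝ u p (1, 0) * h p
            + (m : ℝ) * u p * fderiv ℝ h p (1, 0)) * p.1
          - (m : ℝ) * u p * h p * 1) / p.1 ^ 2) = 0 := by
    have h0 : fderiv ℝ (fun q => fderiv ℝ h q (0, 1)
        + (u q * fderiv ℝ h q (1, 0) + (γ - 1) / 2 * (h q * fderiv ℝ u q (1, 0))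
          + (γ - 1) / 2 * ((m : ℝ) * u q * h q / q.1))) p (1, 0) = 0 := by
      rw [hG1.fderiv_eq]; simp
    rw [pd_add hdH2 hdB1,
      pd_add ((hdu.fun_mul hdH1).fun_add ((hdh.fun_mul hdU1).const_mul _)) (hdQ.const_mul _),
      pd_add (hdu.fun_mul hdH1) ((hdh.fun_mul hdU1).const_mul _),
      pd_mul hdu hdH1, pd_const_mul _ (hdh.fun_mul hdU1), pd_mul hdh hdU1,
      pd_const_mul _ hdQ, dQ] at h0
    linarith
  -- symmetry of second derivatives
  have symU : fderiv ℝ (fun q => fderiv ℝ u q (1, 0)) p (0, 1)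
      = fderiv ℝ (fun q => fderiv ℝ u q (0, 1)) p (1, 0) := by
    rw [pd_clm hdu' ((1 : ℝ), (0 : ℝ)), pd_clm hdu' ((0 : ℝ), (1 : ℝ))]
    exact (hu2.isSymmSndFDerivAt (by norm_num)) _ _
  have symH : fderiv ℝ (fun q => fderiv ℝ h q (1, 0)) p (0, 1)
      = fderiv ℝ (fun q => fderiv ℝ h q (0, 1)) p (1, 0) := by
    rw [pd_clm hdh' ((1 : ℝ), (0 : ℝ)), pd_clm hdh' ((0 : ℝ), (1 : ℝ))]
    exact (hh2.isSymmSndFDerivAt (by norm_num)) _ _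
  -- derivative of bet in an arbitrary direction
  have hdN : DifferentiableAt ℝ (fun q => (m : ℝ) * h q * u q) p := (hdh.const_mul _).mul hdu
  have hdD : DifferentiableAt ℝ (fun q => q.1 * (u q - h q)) p := hfst.mul (hdu.sub hdh)
  have hD0 : p.1 * (u p - h p) ≠ 0 := mul_ne_zero hr0 hc1
  have dbet : ∀ v : ℝ × ℝ,
      fderiv ℝ (fun q => fderiv ℝ u q (1, 0) - 2 / (γ - 1) * fderiv ℝ h q (1, 0)
          - (m : ℝ) * h q * u q / (q.1 * (u q - h q))) p v
        = fderiv ℝ (fun q => fderiv ℝ u q (1, 0)) p v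
          - 2 / (γ - 1) * fderiv ℝ (fun q => fderiv ℝ h q (1, 0)) p v
          - (((m : ℝ) * fderiv ℝ h p v * u p + (m : ℝ) * h p * fderiv ℝ u p v)
                * (p.1 * (u p - h p))
              - (m : ℝ) * h p * u p
                * (v.1 * (u p - h p) + p.1 * (fderiv ℝ u p v - fderiv ℝ h p v)))
            / (p.1 * (u p - h p)) ^ 2 := by
    intro v
    rw [pd_sub (hdU1.fun_sub (hdH1.const_mul _)) (diff_div hdN hdD hD0),
      pd_sub hdU1 (hdH1.const_mul _), pd_const_mul _ hdH1,
      pd_div hdN hdD hD0, pd_mul (hdh.const_mul (m : ℝ)) hdu, pd_const_mul _ hdh,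
      pd_mul hfst (hdu.fun_sub hdh), pd_sub hdu hdh, pd_fst]
  have hbet_eq : bet γ m h u
      = fun q => fderiv ℝ u q (1, 0) - 2 / (γ - 1) * fderiv ℝ h q (1, 0)
          - (m : ℝ) * h q * u q / (q.1 * (u q - h q)) := by
    funext q; simp only [bet, pdr]
  have hUm : fderiv ℝ (fun q => fderiv ℝ u q (0, 1)) p (1, 0)
      = -(fderiv ℝ u p (1, 0) * fderiv ℝ u p (1, 0)
          + u p * fderiv ℝ (fun q => fderiv ℝ u q (1, 0)) p (1, 0))
        - 2 / (γ - 1) * (fderiv ℝ h p (1, 0) * fderiv ℝ h p (1, 0)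
          + h p * fderiv ℝ (fun q => fderiv ℝ h q (1, 0)) p (1, 0)) := by
    linarith
  have hHm : fderiv ℝ (fun q => fderiv ℝ h q (0, 1)) p (1, 0)
      = -(fderiv ℝ u p (1, 0) * fderiv ℝ h p (1, 0)
          + u p * fderiv ℝ (fun q => fderiv ℝ h q (1, 0)) p (1, 0))
        - (γ - 1) / 2 * (fderiv ℝ h p (1, 0) * fderiv ℝ u p (1, 0)
          + h p * fderiv ℝ (fun q => fderiv ℝ u q (1, 0)) p (1, 0))
        - (γ - 1) / 2 * ((((m : ℝ) * fderiv ℝ u p (1, 0) * h p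
            + (m : ℝ) * u p * fderiv ℝ h p (1, 0)) * p.1
          - (m : ℝ) * u p * h p * 1) / p.1 ^ 2) := by
    linarith
  simp only [Dc, pdt, pdr, alp, hbet_eq]
  rw [dbet ((0 : ℝ), (1 : ℝ)), dbet ((1 : ℝ), (0 : ℝ)), symU, symH, hUm, hHm, hut, hht]
  exact riccati_algebra γ (m : ℝ) p.1 (h p) (u p) (fderiv ℝ h p (1, 0)) (fderiv ℝ u p (1, 0))
    (fderiv ℝ (fun q => fderiv ℝ u q (1, 0)) p (1, 0))
    (fderiv ℝ (fun q => fderiv ℝ h q (1, 0)) p (1, 0)) hr0 hc1 hc2 hγ1
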